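/- arXiv:2403.09020 — 5 statements merged into one kernel-verified Lean document; each statement's English description precedes it below -/
import Mathlib

section
/- If κ is an uncountable cardinal and there exists a nonprincipal σ-complete (countably complete) ultrafilter on κ, then there exists a strongly inaccessible cardinal λ with λ ≤ κ. -/
/-!
Let `λ` be the least cardinal carrying a nonprincipal σ-complete ultrafilter `U`. Then `U` is
even `λ`-complete: if fewer than `λ` sets of `U` had an intersection outside `U`, their
complements together with that intersection would split the underlying type into fewer than `λ`
null pieces, and pushing `U` forward to the index set would give a smaller such cardinal.
Completeness makes every set of size `< λ` null. Hence `λ` is regular, since otherwise it would be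
a union of fewer than `λ` initial segments, each of size `< λ`; and `λ` is a strong limit, since an
injection into `Set ι` with `#ι < λ` lets `U` decide every coordinate, and the points following
all these decisions form a set in `U` with at most one element.
-/

open Cardinal Set Filter

universe u

theorem CountableInterFilter.of_forall_nat {α : Type*} {l : Filter α}
    (h : ∀ s : ℕ → Set α, (∀ n, s n ∈ l) → (⋂ n, s n) ∈ l) : CountableInterFilter l where
  countable_sInter_mem S hS hmem := by
    rcases S.eq_empty_or_nonempty with rfl | hne
    · simp
    · obtain ⟨s, rfl⟩ := hS.exists_eq_range hne
      rw [sInter_range]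
      exact h s fun n => hmem _ (mem_range_self n)

namespace Ultrafilter

variable {β : Type u} (U : Ultrafilter β)

theorem infinite_of_forall_singleton_notMem (hU : ∀ x, ({x} : Set β) ∉ U) : Infinite β := by
  by_contra hfin
  rw [not_infinite_iff_finite] at hfin
  obtain ⟨x, rfl⟩ := U.eq_pure_of_finite
  exact hU x (mem_pure.2 rfl)

section CardinalInter

variable {c : Cardinal.{u}} [CardinalInterFilter (U : Filter β) c]

theorem iUnion_notMem {ι : Type u} (hι : #ι < c) {s : ι → Set β} (hs : ∀ i, s i ∉ U) :
    (⋃ i, s i) ∉ U := by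
  simp_rw [← compl_mem_iff_notMem, compl_iUnion] at hs ⊢
  exact (cardinal_iInter_mem hι).2 hs

theorem notMem_of_mk_lt (hU : ∀ x, ({x} : Set β) ∉ U) {s : Set β} (hs : #s < c) : s ∉ U := by
  simpa using U.iUnion_notMem hs (s := fun x : s => {(x : β)}) fun x => hU x

theorem two_power_lt_mk (hU : ∀ x, ({x} : Set β) ∉ U) {μ : Cardinal.{u}} (hμ : μ < c) :
    2 ^ μ < #β := by
  by_contra! hle
  obtain ⟨ι, rfl⟩ : ∃ ι : Type u, #ι = μ := ⟨μ.out, mk_out μ⟩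
  rw [← mk_set] at hle
  obtain ⟨g⟩ := hle
  let b : Set ι := {i | {x | i ∈ g x} ∈ U}
  have hdecide : ∀ i, {x | i ∈ g x ↔ i ∈ b} ∈ U := by
    intro i
    by_cases hi : {x | i ∈ g x} ∈ U
    · simp [b, hi]
    · simpa [b, hi, compl_ofPred] using compl_mem_iff_notMem.2 hi
  have hmem := (cardinal_iInter_mem hμ).2 hdecide
  obtain ⟨x₀, hx₀⟩ := U.nonempty_of_mem hmem
  refine hU x₀ (mem_of_superset hmem fun y hy => g.injective ?_)
  simp only [mem_iInter, mem_ofPred_eq] at hx₀ hy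
  ext i
  rw [hy, hx₀]

end CardinalInter

theorem aleph0_lt_mk [CountableInterFilter (U : Filter β)] (hU : ∀ x, ({x} : Set β) ∉ U) :
    ℵ₀ < #β := by
  by_contra! hβ
  refine U.notMem_of_mk_lt (c := ℵ₁) hU ?_ univ_mem
  rw [mk_univ]
  exact hβ.trans_lt aleph0_lt_aleph_one

theorem le_cof_ord_mk [CardinalInterFilter (U : Filter β) #β] (hU : ∀ x, ({x} : Set β) ∉ U) :
    #β ≤ (#β).ord.cof := by
  by_contra! hcof
  have : Infinite β := U.infinite_of_forall_singleton_notMem hU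
  obtain ⟨_, _, hord⟩ := exists_ord_eq_type_lt β
  obtain ⟨S, hS, hScard⟩ := Order.exists_cof_eq β
  rw [hord, Ordinal.cof_type, ← hScard] at hcof
  have hcover : ⋃ s : S, Iic (s : β) = Set.univ := by
    rw [iUnion_coe_set]
    exact isCofinal_iff_iUnion_Iic_eq_univ.1 hS
  exact U.iUnion_notMem hcof (fun s => U.notMem_of_mk_lt hU (mk_Iic_lt _ hord (aleph0_le_mk β)))
    (hcover ▸ univ_mem)

theorem exists_nonprincipal_of_iUnion_eq_univ [CountableInterFilter (U : Filter β)] {ι : Type*}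
    {s : ι → Set β} (hs : ⋃ i, s i = Set.univ) (hsU : ∀ i, s i ∉ U) :
    ∃ V : Ultrafilter ι, CountableInterFilter (V : Filter ι) ∧ ∀ i, ({i} : Set ι) ∉ V := by
  choose f hf using fun x => mem_iUnion.1 (hs ▸ mem_univ x)
  refine ⟨U.map f, by rw [coe_map]; infer_instance, fun i hi => hsU i ?_⟩
  exact mem_of_superset (mem_map.1 hi) fun x (hx : f x = i) => hx ▸ hf x

theorem cardinalInterFilter_mk_of_minimal [CountableInterFilter (U : Filter β)]
    (hmin : ∀ (ι : Type u) (V : Ultrafilter ι), CountableInterFilter (V : Filter ι) →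
      (∀ i, ({i} : Set ι) ∉ V) → #β ≤ #ι) :
    CardinalInterFilter (U : Filter β) #β where
  cardinal_sInter_mem S hS hmem := by
    by_contra hnotMem
    obtain ⟨s₀, hs₀⟩ : S.Nonempty := nonempty_iff_ne_empty.2 fun h => hnotMem (by simp [h])
    have hcover : ⋃ s : S, ((s : Set β)ᶜ ∪ ⋂₀ S) = Set.univ := by
      refine eq_univ_of_forall fun x => mem_iUnion.2 ?_
      by_cases hx : x ∈ ⋂₀ S
      · exact ⟨⟨s₀, hs₀⟩, Or.inr hx⟩
      · obtain ⟨s, hs, hxs⟩ := not_forall₂.1 hx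
        exact ⟨⟨s, hs⟩, Or.inl hxs⟩
    have hnull (s : S) : (s : Set β)ᶜ ∪ ⋂₀ S ∉ U := by
      rw [union_mem_iff, compl_mem_iff_notMem, not_or, not_not]
      exact ⟨hmem s s.2, hnotMem⟩
    obtain ⟨V, hV, hVU⟩ := U.exists_nonprincipal_of_iUnion_eq_univ hcover hnull
    exact hS.not_ge (hmin S V hV hVU)

theorem exists_cardinalInterFilter_mk [CountableInterFilter (U : Filter β)]
    (hU : ∀ x, ({x} : Set β) ∉ U) :
    ∃ (γ : Type u) (V : Ultrafilter γ), #γ ≤ #β ∧ CountableInterFilter (V : Filter γ) ∧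
      (∀ x, ({x} : Set γ) ∉ V) ∧ CardinalInterFilter (V : Filter γ) #γ := by
  let ulamCards : Set Cardinal.{u} := {c | ∃ (γ : Type u) (V : Ultrafilter γ), #γ = c ∧
    CountableInterFilter (V : Filter γ) ∧ ∀ x, ({x} : Set γ) ∉ V}
  have hβ : #β ∈ ulamCards := ⟨β, U, rfl, ‹_›, hU⟩
  obtain ⟨γ, V, hγ, hV, hVU⟩ := csInf_mem ⟨_, hβ⟩
  exact ⟨γ, V, hγ ▸ csInf_le' hβ, hV, hVU, V.cardinalInterFilter_mk_of_minimal
    fun ι W hW hWU => hγ ▸ csInf_le' ⟨ι, W, rfl, hW, hWU⟩⟩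

end Ultrafilter

theorem ulam_inaccessible_general {α : Type*}
    (U : Ultrafilter α)
    (hcc : ∀ s : ℕ → Set α, (∀ n, s n ∈ U) → (⋂ n, s n) ∈ U)
    (hnp : ∀ x : α, ({x} : Set α) ∉ U) :
    ∃ lam : Cardinal, lam.IsInaccessible ∧ lam ≤ Cardinal.mk α := by
  have : CountableInterFilter (U : Filter α) := .of_forall_nat hcc
  obtain ⟨γ, V, hγα, hV, hVU, hVcomplete⟩ := U.exists_cardinalInterFilter_mk hnp
  exact ⟨#γ, ⟨V.aleph0_lt_mk hVU, V.le_cof_ord_mk hVU, fun _ hμ => V.two_power_lt_mk hVU hμ⟩,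
    hγα⟩

/-- Ulam's theorem: if `κ` is an uncountable cardinal carrying a nonprincipal
σ-complete (countably complete) ultrafilter, then there is a strongly
inaccessible cardinal `≤ κ`. -/
theorem ulam_inaccessible {α : Type*} (hα : Cardinal.aleph0 < Cardinal.mk α)
    (U : Ultrafilter α)
    (hcc : ∀ s : ℕ → Set α, (∀ n, s n ∈ U) → (⋂ n, s n) ∈ U)
    (hnp : ∀ x : α, ({x} : Set α) ∉ U) :
    ∃ lam : Cardinal, lam.IsInaccessible ∧ lam ≤ Cardinal.mk α :=
  ulam_inaccessible_general U hcc hnp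
end

section
/- Suppose f guesses Col(ω,ω₁)-filters. Then the collection NS_f = {N ⊆ ω₁ : N is not f-stationary} is a normal uniform ideal on ω₁: it contains all bounded subsets of ω₁, is closed under subsets, and is closed under diagonal unions. -/
/-!
A set `N ⊆ ω₁` lies in `NS_f` exactly when some sequence of dense sets and some club leave no
point `ξ` of `N` whose filter `f ξ` meets all the dense sets indexed below `ξ`. Bounded sets lie in
`NS_f` because final segments are clubs, and witnesses for `N` serve for its subsets. For a
diagonal union of sets `S α` with witnesses `D α β` and `C α`, re-index the `ω₁ × ω₁` dense sets
`D α β` along a pairing bijection `ω₁ × ω₁ ≃ ω₁`. Then the diagonal intersection of the `C α`,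
cut down to the ordinals closed under the pairing, witnesses the union. Diagonal intersections
of clubs are clubs by an `ω`-iteration, since `ω₁` has uncountable cofinality.
-/

open Set

noncomputable section

/-- The first uncountable ordinal `ω₁`. -/
def omega1 : Ordinal := (Cardinal.aleph 1).ord

/-- `C` is a club (closed unbounded) subset of `ω₁`. -/
def IsClubOmega1 (C : Set Ordinal) : Prop :=
  C ⊆ Set.Iio omega1 ∧
  (∀ o < omega1, ∃ c ∈ C, o < c) ∧
  (∀ s : Set Ordinal, s ⊆ C → s.Nonempty → sSup s < omega1 → sSup s ∈ C)

/-- `S` is a stationary subset of `ω₁`. -/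
def IsStationaryOmega1 (S : Set Ordinal) : Prop :=
  S ⊆ Set.Iio omega1 ∧ ∀ C : Set Ordinal, IsClubOmega1 C → (S ∩ C).Nonempty

/-- Finite partial functions `ω ⇀ ω₁`, coded as functional finsets of pairs with
values below `ω₁`. -/
def IsCond (p : Finset (ℕ × Ordinal)) : Prop :=
  (∀ x ∈ p, x.2 < omega1) ∧ ∀ x ∈ p, ∀ y ∈ p, x.1 = y.1 → x.2 = y.2

/-- The forcing `Col(ω,ω₁)`. -/
def Col : Type _ := {p : Finset (ℕ × Ordinal) // IsCond p}

/-- `p ≤ q` iff `p` extends `q`. -/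
instance : LE Col := ⟨fun p q => q.1 ⊆ p.1⟩

/-- Two conditions are compatible iff they have a common extension. -/
def Col.Compatible (p q : Col) : Prop := ∃ r : Col, r ≤ p ∧ r ≤ q

/-- `Col(ω,ω₁) ∩ α`: conditions with range contained in `α`. -/
def colBelow (α : Ordinal) : Set Col := {p | ∀ x ∈ p.1, x.2 < α}

/-- `F` is a filter on the suborder `B` of `Col(ω,ω₁)` (the empty set counts as a
filter): upward closed within `B` and directed. -/
def IsColFilter (B F : Set Col) : Prop :=
  F ⊆ B ∧ (∀ p ∈ F, ∀ q ∈ B, p ≤ q → q ∈ F) ∧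
  ∀ p ∈ F, ∀ q ∈ F, ∃ r ∈ F, r ≤ p ∧ r ≤ q

/-- `f` guesses `Col(ω,ω₁)`-filters. -/
def Guesses (f : Ordinal → Set Col) : Prop :=
  ∀ α < omega1, IsColFilter (colBelow α) (f α)

/-- `S^f_b = {α < ω₁ : b ∈ f(α)}`. -/
def Sfb (f : Ordinal → Set Col) (b : Col) : Set Ordinal :=
  {α | α < omega1 ∧ b ∈ f α}

/-- `D` is dense in `Col(ω,ω₁)`. -/
def ColDense (D : Set Col) : Prop := ∀ p : Col, ∃ q ∈ D, q ≤ p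

/-- `S ⊆ ω₁` is `f`-stationary. -/
def fStationary (f : Ordinal → Set Col) (S : Set Ordinal) : Prop :=
  S ⊆ Set.Iio omega1 ∧
  ∀ D : Ordinal → Set Col, (∀ β < omega1, ColDense (D β)) →
    IsStationaryOmega1 {α | α ∈ S ∧ ∀ β < α, (f α ∩ D β).Nonempty}

/-- `f` witnesses `◇(ω₁^{<ω})`. -/
def WitnessesDiamond (f : Ordinal → Set Col) : Prop :=
  Guesses f ∧ ∀ b : Col, fStationary f (Sfb f b)

/-- The ideal of non-`f`-stationary sets. -/
def NSf (f : Ordinal → Set Col) : Set (Set Ordinal) :=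
  {N | N ⊆ Set.Iio omega1 ∧ ¬ fStationary f N}

open Cardinal

universe u

lemma omega1_isSuccLimit : Order.IsSuccLimit omega1 :=
  isSuccLimit_ord (aleph0_le_aleph 1)

lemma aleph0_lt_cof_omega1 : ℵ₀ < omega1.cof := by
  rw [omega1, isRegular_aleph_one.cof_ord]
  exact aleph0_lt_aleph_one

lemma iSup_Iio_lt_omega1 {ξ : Ordinal.{u}} (hξ : ξ < omega1.{u}) {g : Iio ξ → Ordinal.{u}}
    (hg : ∀ α, g α < omega1) : ⨆ α, g α < omega1 := by
  refine Ordinal.lift_iSup_lt_of_lt_cof ?_ hg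
  rw [mk_Iio_ordinal, ← Ordinal.lift_cof, lift_lift, lift_lt, omega1,
    isRegular_aleph_one.cof_ord]
  exact lt_ord.mp hξ

lemma exists_pair_unpair_omega1 :
    ∃ (pair : Ordinal.{u} → Ordinal.{u} → Ordinal.{u})
      (unpair : Ordinal.{u} → Ordinal.{u} × Ordinal.{u}),
      (∀ α < omega1, ∀ β < omega1, pair α β < omega1 ∧ unpair (pair α β) = (α, β)) ∧
      ∀ γ < omega1, (unpair γ).1 < omega1 ∧ (unpair γ).2 < omega1 := by
  have hω₁ : ℵ₀ ≤ #(Iio omega1.{u}) := by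
    rw [mk_Iio_ordinal, aleph0_le_lift, omega1, card_ord]
    exact aleph0_le_aleph 1
  obtain ⟨e⟩ : Nonempty (Iio omega1.{u} × Iio omega1.{u} ≃ Iio omega1.{u}) := by
    rw [← Cardinal.eq, mk_prod, lift_id]
    exact mul_eq_self hω₁
  refine ⟨fun α β => if h : α < omega1 ∧ β < omega1 then e (⟨α, h.1⟩, ⟨β, h.2⟩) else 0,
    fun γ => if h : γ < omega1 then Prod.map Subtype.val Subtype.val (e.symm ⟨γ, h⟩) else (0, 0),
    fun α hα β hβ => ?_, fun γ hγ => ?_⟩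
  · have he : (e (⟨α, hα⟩, ⟨β, hβ⟩) : Ordinal) < omega1 := (e _).2
    simp [hα, hβ, he]
  · simpa [hγ] using ⟨(e.symm ⟨γ, hγ⟩).1.2, (e.symm ⟨γ, hγ⟩).2.2⟩

lemma IsClubOmega1.isLUB_mem {C s : Set Ordinal} {ξ : Ordinal} (hC : IsClubOmega1 C)
    (hs : s ⊆ C) (hne : s.Nonempty) (hξ : ξ < omega1) (hsξ : IsLUB s ξ) : ξ ∈ C := by
  rw [← hsξ.csSup_eq hne] at hξ ⊢
  exact hC.2.2 s hs hne hξ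

lemma isClubOmega1_Ioo {β : Ordinal} (hβ : β < omega1) : IsClubOmega1 (Ioo β omega1) := by
  refine ⟨fun ξ hξ => hξ.2, fun o ho => ⟨Order.succ (max β o), ⟨?_, ?_⟩, ?_⟩,
    fun s hs ⟨x, hx⟩ hlt => ⟨?_, hlt⟩⟩
  · exact (le_max_left β o).trans_lt (Order.lt_succ _)
  · exact omega1_isSuccLimit.succ_lt (max_lt hβ ho)
  · exact (le_max_right β o).trans_lt (Order.lt_succ _)
  · exact (hs hx).1.trans_le (le_csSup (bddAbove_Iio.mono fun y hy => (hs hy).2) hx)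

def diagInter (C : Ordinal → Set Ordinal) : Set Ordinal :=
  {ξ | ξ < omega1 ∧ ∀ α < ξ, ξ ∈ C α}

def diagUnion (S : Ordinal → Set Ordinal) : Set Ordinal :=
  {ξ | ξ < omega1 ∧ ∃ α < ξ, ξ ∈ S α}

lemma exists_gt_mem_diagInter {C : Ordinal.{u} → Set Ordinal.{u}}
    (hC : ∀ α < omega1, IsClubOmega1 (C α)) {o : Ordinal.{u}} (ho : o < omega1) :
    ∃ ξ ∈ diagInter C, o < ξ := by
  choose! F hFC hFgt using fun α hα => (hC α hα).2.1
  let step : Ordinal.{u} → Ordinal.{u} := fun ξ => Order.succ ξ ⊔ ⨆ α : Iio ξ, F α ξ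
  have step_lt : ∀ ξ < omega1, step ξ < omega1 := fun ξ hξ =>
    max_lt (omega1_isSuccLimit.succ_lt hξ) (iSup_Iio_lt_omega1 hξ fun α =>
      (hC α (α.2.trans hξ)).1 (hFC α (α.2.trans hξ) ξ hξ))
  have le_step : id ≤ step := fun ξ => (Order.le_succ ξ).trans le_sup_left
  have F_le_step : ∀ ξ, ∀ α < ξ, F α ξ ≤ step ξ := fun ξ α hα =>
    (Ordinal.le_iSup (fun α : Iio ξ => F α ξ) ⟨α, hα⟩).trans le_sup_right
  set a := Order.succ o
  have hξ : Ordinal.nfp step a < omega1 :=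
    Ordinal.nfp_lt_ord aleph0_lt_cof_omega1 step_lt (omega1_isSuccLimit.succ_lt ho)
  refine ⟨Ordinal.nfp step a, ⟨hξ, fun α hα => ?_⟩,
    (Order.lt_succ o).trans_le (Ordinal.le_nfp _ _)⟩
  obtain ⟨n, hn⟩ := Ordinal.lt_nfp_iff.1 hα
  have hαω : α < omega1 := hα.trans hξ
  -- Past stage `n`, each step of the iteration passes a point of `C α`.
  let g : ℕ → Ordinal := fun m => step^[n + m] a
  have g_lt : ∀ m, g m < omega1 := fun m => (Ordinal.iterate_le_nfp _ _ _).trans_lt hξ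
  have lt_g : ∀ m, α < g m := fun m =>
    hn.trans_le (Function.monotone_iterate_of_id_le le_step (n.le_add_right m) a)
  refine (hC α hαω).isLUB_mem (s := range fun m => F α (g m))
    (by rintro _ ⟨m, rfl⟩; exact hFC α hαω _ (g_lt m)) (range_nonempty _) hξ ⟨?_, ?_⟩
  · rintro _ ⟨m, rfl⟩
    calc F α (g m) ≤ step (g m) := F_le_step _ α (lt_g m)
      _ = step^[n + m + 1] a := (Function.iterate_succ_apply' step _ a).symm
      _ ≤ Ordinal.nfp step a := Ordinal.iterate_le_nfp _ _ _
  · refine fun b hb => Ordinal.nfp_le fun k => ?_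
    calc step^[k] a ≤ g k := Function.monotone_iterate_of_id_le le_step (k.le_add_left n) a
      _ ≤ F α (g k) := (hFgt α hαω _ (g_lt k)).le
      _ ≤ b := hb ⟨k, rfl⟩

lemma isClubOmega1_diagInter {C : Ordinal → Set Ordinal}
    (hC : ∀ α < omega1, IsClubOmega1 (C α)) : IsClubOmega1 (diagInter C) := by
  refine ⟨fun ξ hξ => hξ.1, fun o ho => exists_gt_mem_diagInter hC ho,
    fun s hs hne hlt => ⟨hlt, fun α hα => ?_⟩⟩
  obtain ⟨b, hb, hαb⟩ := exists_lt_of_lt_csSup hne hα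
  have hbdd : BddAbove s := bddAbove_Iio.mono fun x hx => (hs hx).1
  exact (hC α (hα.trans hlt)).isLUB_mem (s := s ∩ Ici b)
    (fun y hy => (hs hy.1).2 α (hαb.trans_le hy.2)) ⟨b, hb, mem_Ici.2 le_rfl⟩ hlt
    ((isLUB_csSup hne hbdd).inter_Ici_of_mem hb)

lemma IsClubOmega1.inter {C D : Set Ordinal} (hC : IsClubOmega1 C) (hD : IsClubOmega1 D) :
    IsClubOmega1 (C ∩ D) := by
  refine ⟨fun ξ hξ => hC.1 hξ.1, fun o ho => ?_, fun s hs hne hlt =>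
    ⟨hC.2.2 s (fun x hx => (hs hx).1) hne hlt, hD.2.2 s (fun x hx => (hs hx).2) hne hlt⟩⟩
  -- Above `o`, the diagonal intersection of `C, …, C, D, D, …` (switching after `o`) is in both.
  obtain ⟨ξ, ⟨-, hξ⟩, hoξ⟩ := exists_gt_mem_diagInter (C := fun α => if α ≤ o then C else D)
    (fun α _ => by split_ifs <;> assumption) (omega1_isSuccLimit.succ_lt ho)
  refine ⟨ξ, ⟨?_, ?_⟩, (Order.lt_succ o).trans hoξ⟩
  · simpa using hξ o ((Order.lt_succ o).trans hoξ)
  · simpa using hξ (Order.succ o) hoξ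

lemma isClubOmega1_pairClosed {pair : Ordinal → Ordinal → Ordinal}
    (hpair : ∀ α < omega1, ∀ β < omega1, pair α β < omega1) :
    IsClubOmega1 {ξ | ξ < omega1 ∧ ∀ α < ξ, ∀ β < ξ, pair α β < ξ} := by
  have hdiag := isClubOmega1_diagInter fun α hα =>
    isClubOmega1_diagInter fun β hβ => isClubOmega1_Ioo (hpair α hα β hβ)
  convert hdiag using 1
  exact Set.ext fun ξ => ⟨fun ⟨hξ, h⟩ => ⟨hξ, fun α hα => ⟨hξ, fun β hβ => ⟨h α hα β hβ, hξ⟩⟩⟩,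
    fun ⟨hξ, h⟩ => ⟨hξ, fun α hα β hβ => ((h α hα).2 β hβ).1⟩⟩

lemma IsStationaryOmega1.mono {S T : Set Ordinal} (h : IsStationaryOmega1 S) (hST : S ⊆ T)
    (hT : T ⊆ Iio omega1) : IsStationaryOmega1 T :=
  ⟨hT, fun C hC => (h.2 C hC).mono (inter_subset_inter_left C hST)⟩

lemma IsStationaryOmega1.not_subset_Iio {S : Set Ordinal} (h : IsStationaryOmega1 S)
    {β : Ordinal} (hβ : β < omega1) : ¬ S ⊆ Iio β := fun hS => by
  obtain ⟨ξ, hξS, hξ⟩ := h.2 _ (isClubOmega1_Ioo hβ)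
  exact (hS hξS).asymm hξ.1

lemma colDense_univ : ColDense (univ : Set Col) :=
  fun p => ⟨p, mem_univ p, Subset.rfl⟩

namespace fStationary

variable {f : Ordinal → Set Col} {S T : Set Ordinal}

lemma isStationaryOmega1 (h : fStationary f S) : IsStationaryOmega1 S :=
  (h.2 (fun _ => univ) fun _ _ => colDense_univ).mono (fun _ hα => hα.1) h.1

lemma mono (h : fStationary f S) (hST : S ⊆ T) (hT : T ⊆ Iio omega1) : fStationary f T :=
  ⟨hT, fun D hD => (h.2 D hD).mono (fun _ hα => ⟨hST hα.1, hα.2⟩) fun _ hα => hT hα.1⟩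

end fStationary

lemma exists_dense_club_of_not_fStationary {f : Ordinal → Set Col} {S : Set Ordinal}
    (hS : S ⊆ Iio omega1) (h : ¬ fStationary f S) :
    ∃ D : Ordinal → Set Col, (∀ β < omega1, ColDense (D β)) ∧
      ∃ C, IsClubOmega1 C ∧ ∀ ξ ∈ S, ξ ∈ C → ∃ β < ξ, f ξ ∩ D β = ∅ := by
  by_contra! H
  refine h ⟨hS, fun D hD => ⟨fun _ hα => hS hα.1, fun C hC => ?_⟩⟩
  obtain ⟨ξ, hξS, hξC, hξD⟩ := H D hD C hC
  exact ⟨ξ, ⟨hξS, hξD⟩, hξC⟩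

lemma diagUnion_mem_NSf {f : Ordinal → Set Col} {S : Ordinal → Set Ordinal}
    (hS : ∀ α < omega1, S α ∈ NSf f) : diagUnion S ∈ NSf f := by
  refine ⟨fun ξ hξ => hξ.1, fun hstat => ?_⟩
  choose! D hD C hC hDC using fun α hα =>
    exists_dense_club_of_not_fStationary (hS α hα).1 (hS α hα).2
  obtain ⟨pair, unpair, hpair, hunpair⟩ := exists_pair_unpair_omega1
  obtain ⟨ξ, ⟨⟨hξ, α, hαξ, hξS⟩, hξE⟩, hξC, hξpair⟩ :=
    (hstat.2 (fun γ => D (unpair γ).1 (unpair γ).2)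
      (fun γ hγ => hD _ (hunpair γ hγ).1 _ (hunpair γ hγ).2)).2 _
      ((isClubOmega1_diagInter hC).inter
        (isClubOmega1_pairClosed fun α hα β hβ => (hpair α hα β hβ).1))
  have hαω : α < omega1 := hαξ.trans hξ
  obtain ⟨β, hβξ, hempty⟩ := hDC α hαω ξ hξS (hξC.2 α hαξ)
  have hmeet := hξE (pair α β) (hξpair.2 α hαξ β hβξ)
  rw [(hpair α hαω β (hβξ.trans hξ)).2] at hmeet
  exact hmeet.ne_empty hempty

theorem NSf_normal_uniform_ideal_general (f : Ordinal → Set Col) :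
    (∀ N ⊆ Set.Iio omega1, (∃ β < omega1, ∀ ξ ∈ N, ξ < β) → N ∈ NSf f) ∧
    (∀ N ∈ NSf f, ∀ M ⊆ N, M ∈ NSf f) ∧
    (∀ S : Ordinal → Set Ordinal, (∀ α < omega1, S α ∈ NSf f) →
      {ξ | ξ < omega1 ∧ ∃ α < ξ, ξ ∈ S α} ∈ NSf f) :=
  ⟨fun _ hN ⟨_, hβ, hNβ⟩ => ⟨hN, fun h => h.isStationaryOmega1.not_subset_Iio hβ hNβ⟩,
    fun _ hN _ hMN => ⟨hMN.trans hN.1, fun hM => hN.2 (hM.mono hMN hN.1)⟩,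
    fun _ hS => diagUnion_mem_NSf hS⟩

/-- `NS_f` is a normal uniform ideal on `ω₁`: it contains all bounded subsets of
`ω₁`, is closed under subsets, and is closed under diagonal unions. -/
theorem NSf_normal_uniform_ideal (f : Ordinal → Set Col) (hf : Guesses f) :
    (∀ N ⊆ Set.Iio omega1, (∃ β < omega1, ∀ ξ ∈ N, ξ < β) → N ∈ NSf f) ∧
    (∀ N ∈ NSf f, ∀ M ⊆ N, M ∈ NSf f) ∧
    (∀ S : Ordinal → Set Ordinal, (∀ α < omega1, S α ∈ NSf f) →
      {ξ | ξ < omega1 ∧ ∃ α < ξ, ξ ∈ S α} ∈ NSf f) :=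
  NSf_normal_uniform_ideal_general f
end
end

section
/- Suppose f guesses Col(ω,ω₁)-filters and satisfies: (a) for every dense D ⊆ Col(ω,ω₁), the set {α < ω₁ : f(α) ∩ D ≠ ∅} contains a club of ω₁, and (b) for every b ∈ Col(ω,ω₁), S^f_b = {α : b ∈ f(α)} is stationary. Then every stationary subset of ω₁ is f-stationary. -/
open Set

noncomputable section

universe u

lemma bddAbove_of_subset_Iio {s : Set Ordinal.{u}} (h : s ⊆ Set.Iio omega1) : BddAbove s :=
  ⟨omega1, fun _ hx => le_of_lt (h hx)⟩

lemma nat_iSup_lt_omega1 (f : ℕ → Ordinal.{u}) (h : ∀ n, f n < omega1) :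
    (⨆ n, f n) < omega1 := by
  apply Cardinal.iSup_lt_ord_lift_of_isRegular Cardinal.isRegular_aleph_one ?_ h
  simp [Cardinal.aleph0_lt_aleph_one]

lemma toType_iSup_lt_omega1 {γ : Ordinal.{u}} (hγ : γ < omega1) (f : γ.ToType → Ordinal.{u})
    (h : ∀ i, f i < omega1) : (⨆ i, f i) < omega1 := by
  apply Cardinal.iSup_lt_ord_of_isRegular Cardinal.isRegular_aleph_one ?_ h
  rw [Cardinal.mk_toType]
  exact Cardinal.lt_ord.mp hγ

lemma succ_lt_omega1 {γ : Ordinal.{u}} (hγ : γ < omega1) : γ + 1 < omega1 := by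
  rw [Ordinal.add_one_eq_succ]
  exact (Cardinal.isSuccLimit_ord (Cardinal.aleph0_le_aleph 1)).succ_lt hγ

lemma lt_add_one' (γ : Ordinal.{u}) : γ < γ + 1 := by
  rw [Ordinal.add_one_eq_succ]; exact Order.lt_succ _

lemma club_mem_iSup {C : Set Ordinal.{u}} (hC : IsClubOmega1 C) (x c : ℕ → Ordinal.{u})
    (hc : ∀ n, c n ∈ C) (h1 : ∀ n, x n ≤ c n) (h2 : ∀ n, c n ≤ x (n + 1))
    (hy : (⨆ n, x n) < omega1) : (⨆ n, x n) ∈ C := by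
  have hbc : BddAbove (Set.range c) :=
    bddAbove_of_subset_Iio (by rintro _ ⟨n, rfl⟩; exact hC.1 (hc n))
  have hbx : BddAbove (Set.range x) := by
    refine ⟨⨆ n, c n, ?_⟩
    rintro _ ⟨n, rfl⟩
    exact (h1 n).trans (le_ciSup hbc n)
  have heq : (⨆ n, c n) = ⨆ n, x n := by
    apply le_antisymm
    · exact ciSup_le fun n => (h2 n).trans (le_ciSup hbx (n + 1))
    · exact ciSup_le fun n => (h1 n).trans (le_ciSup hbc n)
  have hmem := hC.2.2 (Set.range c) (by rintro _ ⟨n, rfl⟩; exact hc n)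
    (Set.range_nonempty _) (by rw [show sSup (Set.range c) = ⨆ n, c n from rfl, heq]; exact hy)
  rwa [show sSup (Set.range c) = ⨆ n, c n from rfl, heq] at hmem

lemma club_inter {C₀ C₁ : Set Ordinal.{u}} (h₀ : IsClubOmega1 C₀) (h₁ : IsClubOmega1 C₁) :
    IsClubOmega1 (C₀ ∩ C₁) := by
  refine ⟨fun α hα => h₀.1 hα.1, ?_, ?_⟩
  · intro o ho
    have hn0 : ∀ p : {a : Ordinal.{u} // a < omega1}, ∃ q : {a : Ordinal.{u} // a < omega1},
        q.1 ∈ C₀ ∧ p.1 < q.1 := by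
      intro p
      obtain ⟨c, hc, hlt⟩ := h₀.2.1 p.1 p.2
      exact ⟨⟨c, h₀.1 hc⟩, hc, hlt⟩
    have hn1 : ∀ p : {a : Ordinal.{u} // a < omega1}, ∃ q : {a : Ordinal.{u} // a < omega1},
        q.1 ∈ C₁ ∧ p.1 < q.1 := by
      intro p
      obtain ⟨c, hc, hlt⟩ := h₁.2.1 p.1 p.2
      exact ⟨⟨c, h₁.1 hc⟩, hc, hlt⟩
    choose n0 hn0m hn0lt using hn0
    choose n1 hn1m hn1lt using hn1
    set g : ℕ → {a : Ordinal.{u} // a < omega1} :=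
      fun n => Nat.rec ⟨o, ho⟩ (fun _ p => n1 (n0 p)) n with hg
    set x : ℕ → Ordinal.{u} := fun n => (g n).1 with hx
    have hxlt : ∀ n, x n < omega1 := fun n => (g n).2
    have hstep : ∀ n, g (n + 1) = n1 (n0 (g n)) := fun n => rfl
    have hy : (⨆ n, x n) < omega1 := nat_iSup_lt_omega1 x hxlt
    have hbx : BddAbove (Set.range x) :=
      bddAbove_of_subset_Iio (by rintro _ ⟨n, rfl⟩; exact hxlt n)
    refine ⟨⨆ n, x n, ⟨?_, ?_⟩, ?_⟩
    · refine club_mem_iSup h₀ x (fun n => (n0 (g n)).1) (fun n => hn0m (g n))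
        (fun n => (hn0lt (g n)).le) (fun n => (hn1lt (n0 (g n))).le) hy
    · exact club_mem_iSup h₁ x (fun n => x (n + 1)) (fun n => hn1m (n0 (g n)))
        (fun n => ((hn0lt (g n)).trans (hn1lt (n0 (g n)))).le) (fun n => le_rfl) hy
    · calc o = x 0 := rfl
        _ < x 1 := (hn0lt (g 0)).trans (hn1lt (n0 (g 0)))
        _ ≤ ⨆ n, x n := le_ciSup hbx 1
  · intro s hs hne hlt
    exact ⟨h₀.2.2 s (fun a ha => (hs ha).1) hne hlt, h₁.2.2 s (fun a ha => (hs ha).2) hne hlt⟩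

lemma club_diag (C : Ordinal.{u} → Set Ordinal.{u}) (hC : ∀ β < omega1, IsClubOmega1 (C β)) :
    IsClubOmega1 {α : Ordinal.{u} | α < omega1 ∧ ∀ β < α, α ∈ C β} := by
  refine ⟨fun α hα => hα.1, ?_, ?_⟩
  · intro o ho
    -- choice of next element of C β above γ
    have hnext : ∀ (β : Ordinal.{u}), β < omega1 → ∀ (γ : Ordinal.{u}), γ < omega1 →
        ∃ c : Ordinal.{u}, c ∈ C β ∧ γ < c ∧ c < omega1 := by
      intro β hβ γ hγ
      obtain ⟨c, hc, hlt⟩ := (hC β hβ).2.1 γ hγ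
      exact ⟨c, hc, hlt, (hC β hβ).1 hc⟩
    choose cf hcf1 hcf2 hcf3 using hnext
    -- one step of the construction
    have hF : ∀ p : {a : Ordinal.{u} // a < omega1}, ∃ q : {a : Ordinal.{u} // a < omega1},
        p.1 < q.1 ∧ ∀ β (hβ : β < p.1), cf β (hβ.trans p.2) p.1 p.2 ≤ q.1 := by
      intro p
      set v : p.1.ToType → Ordinal.{u} := fun b =>
        cf ((Ordinal.ToType.mk (o := p.1)).symm b).1
          (((Ordinal.ToType.mk (o := p.1)).symm b).2.trans p.2) p.1 p.2 with hv
      have hvlt : ∀ b, v b < omega1 := fun b => hcf3 _ _ _ _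
      have hsuplt : (⨆ b, v b) < omega1 := toType_iSup_lt_omega1 p.2 v hvlt
      have hbv : BddAbove (Set.range v) :=
        bddAbove_of_subset_Iio (by rintro _ ⟨b, rfl⟩; exact hvlt b)
      refine ⟨⟨max (p.1 + 1) (⨆ b, v b), max_lt (succ_lt_omega1 p.2) hsuplt⟩,
        lt_of_lt_of_le (lt_add_one' p.1) (le_max_left _ _), ?_⟩
      intro β hβ
      have hb : v ((Ordinal.ToType.mk (o := p.1)) ⟨β, hβ⟩) = cf β (hβ.trans p.2) p.1 p.2 := by
        rw [hv]
        simp only [OrderIso.symm_apply_apply]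
      calc cf β (hβ.trans p.2) p.1 p.2 = v ((Ordinal.ToType.mk (o := p.1)) ⟨β, hβ⟩) := hb.symm
        _ ≤ ⨆ b, v b := le_ciSup hbv _
        _ ≤ max (p.1 + 1) (⨆ b, v b) := le_max_right _ _
    choose F hF1 hF2 using hF
    set g : ℕ → {a : Ordinal.{u} // a < omega1} :=
      fun n => Nat.rec ⟨o, ho⟩ (fun _ p => F p) n with hg
    set x : ℕ → Ordinal.{u} := fun n => (g n).1 with hx
    have hxlt : ∀ n, x n < omega1 := fun n => (g n).2
    have hmono : StrictMono x := strictMono_nat_of_lt_succ (fun n => hF1 (g n))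
    have hy : (⨆ n, x n) < omega1 := nat_iSup_lt_omega1 x hxlt
    have hbx : BddAbove (Set.range x) :=
      bddAbove_of_subset_Iio (by rintro _ ⟨n, rfl⟩; exact hxlt n)
    refine ⟨⨆ n, x n, ⟨hy, ?_⟩, lt_of_lt_of_le (hmono (Nat.lt_succ_self 0)) (le_ciSup hbx 1)⟩
    intro β hβ
    have hβω : β < omega1 := hβ.trans hy
    -- find N with β < x N
    have hN : ∃ N, β < x N := by
      by_contra h
      push_neg at h
      exact absurd (ciSup_le h) (not_le.mpr hβ)
    obtain ⟨N, hN⟩ := hN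
    -- subsequence and club elements
    set x' : ℕ → Ordinal.{u} := fun m => x (N + m) with hx'
    have hβx' : ∀ m, β < x' m := fun m => lt_of_lt_of_le hN (hmono.monotone (Nat.le_add_right N m))
    set c : ℕ → Ordinal.{u} := fun m => cf β hβω (x' m) (g (N + m)).2 with hc
    have hsub : (⨆ m, x' m) = ⨆ n, x n := by
      apply le_antisymm
      · exact ciSup_le fun m => le_ciSup hbx (N + m)
      · refine ciSup_le fun n => ?_
        have hb' : BddAbove (Set.range x') :=
          bddAbove_of_subset_Iio (by rintro _ ⟨m, rfl⟩; exact hxlt (N + m))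
        exact le_trans (hmono.monotone (Nat.le_add_left n N)) (le_ciSup hb' n)
    have hmem : (⨆ m, x' m) ∈ C β := by
      refine club_mem_iSup (hC β hβω) x' c (fun m => hcf1 _ _ _ _)
        (fun m => (hcf2 β hβω (x' m) (g (N + m)).2).le) (fun m => ?_) (by rw [hsub]; exact hy)
      have := hF2 (g (N + m)) β (hβx' m)
      calc c m = cf β ((hβx' m).trans (g (N+m)).2) (g (N+m)).1 (g (N+m)).2 := rfl
        _ ≤ (F (g (N + m))).1 := hF2 (g (N + m)) β (hβx' m)
        _ = x' (m + 1) := rfl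
    rwa [hsub] at hmem
  · intro s hs hne hlt
    have hbs : BddAbove s := bddAbove_of_subset_Iio (fun a ha => (hs ha).1)
    refine ⟨hlt, ?_⟩
    intro β hβ
    obtain ⟨a0, ha0s, ha0⟩ := (lt_csSup_iff hbs hne).mp hβ
    set s' : Set Ordinal.{u} := {a ∈ s | β < a} with hs'
    have hsub' : s' ⊆ C β := fun a ha => (hs ha.1).2 β ha.2
    have hne' : s'.Nonempty := ⟨a0, ha0s, ha0⟩
    have hbs' : BddAbove s' := bddAbove_of_subset_Iio (fun a ha => (hs ha.1).1)
    have heq : sSup s' = sSup s := by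
      apply le_antisymm
      · exact csSup_le_csSup hbs hne' (fun a ha => ha.1)
      · refine csSup_le hne (fun a ha => ?_)
        rcases le_or_gt a a0 with h | h
        · exact h.trans (le_csSup hbs' ⟨ha0s, ha0⟩)
        · exact le_csSup hbs' ⟨ha, ha0.trans h⟩
    have := (hC β (hβ.trans hlt)).2.2 s' hsub' hne' (by rw [heq]; exact hlt)
    rwa [heq] at this

/-- If for every dense `D ⊆ Col(ω,ω₁)` the set of `α` with `f(α) ∩ D ≠ ∅`
contains a club, and every `S^f_b` is stationary, then every stationary subset
of `ω₁` is `f`-stationary. -/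
theorem stationary_is_fStationary (f : Ordinal → Set Col) (hf : Guesses f)
    (ha : ∀ D : Set Col, ColDense D →
      ∃ C : Set Ordinal, IsClubOmega1 C ∧ C ⊆ {α | (f α ∩ D).Nonempty})
    (hb : ∀ b : Col, IsStationaryOmega1 (Sfb f b))
    (S : Set Ordinal) (hS : IsStationaryOmega1 S) :
    fStationary f S := by
  refine ⟨hS.1, ?_⟩
  intro D hD
  set Cc : Ordinal → Set Ordinal := fun β =>
    if h : β < omega1 then (ha (D β) (hD β h)).choose else ∅ with hCc
  have hCc1 : ∀ β (h : β < omega1), IsClubOmega1 (Cc β) := by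
    intro β h
    rw [hCc]
    simp only [dif_pos h]
    exact (ha (D β) (hD β h)).choose_spec.1
  have hCc2 : ∀ β (h : β < omega1), Cc β ⊆ {α | (f α ∩ D β).Nonempty} := by
    intro β h
    rw [hCc]
    simp only [dif_pos h]
    exact (ha (D β) (hD β h)).choose_spec.2
  have hΔ : IsClubOmega1 {α : Ordinal | α < omega1 ∧ ∀ β < α, α ∈ Cc β} :=
    club_diag Cc (fun β h => hCc1 β h)
  refine ⟨fun α hα => hS.1 hα.1, ?_⟩
  intro C hC
  obtain ⟨α, hαS, hαΔ, hαC⟩ := hS.2 _ (club_inter hΔ hC)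
  refine ⟨α, ⟨hαS, ?_⟩, hαC⟩
  intro β hβ
  exact hCc2 β (hβ.trans hαΔ.1) (hαΔ.2 β hβ)
end
end

section
/- Suppose f guesses Col(ω,ω₁)-filters, and suppose that for every dense D ⊆ Col(ω,ω₁) the set {α < ω₁ : f(α) ∩ D ≠ ∅} contains a club, and that S^f_b is stationary for every condition b. Then for every stationary T ⊆ ω₁ and every maximal antichain A ⊆ Col(ω,ω₁), there exists b ∈ A such that T ∩ S^f_b is stationary. Consequently the map b ↦ [S^f_b] is a regular (complete) embedding of Col(ω,ω₁) into the Boolean algebra P(ω₁)/NS_{ω₁} restricted to nonzero elements. -/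
open Set

noncomputable section

/-- `A` is a maximal antichain in `Col(ω,ω₁)`. -/
def MaxAntichain (A : Set Col) : Prop :=
  (∀ p ∈ A, ∀ q ∈ A, p ≠ q → ¬ Col.Compatible p q) ∧
  ∀ p : Col, ∃ q ∈ A, Col.Compatible p q

/-! ### Auxiliary lemmas -/

lemma omega1_pos : 0 < omega1 := by
  rw [omega1, Cardinal.lt_ord]
  simpa using Cardinal.aleph0_pos.trans Cardinal.aleph0_lt_aleph_one

lemma bddAbove_of_lt_omega1 {s : Set Ordinal} (hs : ∀ x ∈ s, x < omega1) : BddAbove s :=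
  ⟨omega1, fun x hx => (hs x hx).le⟩

lemma iSup_lt_omega1 (g : ℕ → Ordinal) (hg : ∀ n, g n < omega1) : (⨆ n, g n) < omega1 := by
  apply Ordinal.iSup_lt_ord_lift _ hg
  rw [omega1, Cardinal.isRegular_aleph_one.cof_eq]
  simpa using Cardinal.aleph0_lt_aleph_one

lemma sSup_lt_omega1 {s : Set Ordinal} (hc : s.Countable) (hs : ∀ x ∈ s, x < omega1) :
    sSup s < omega1 := by
  rcases s.eq_empty_or_nonempty with rfl | hne
  · simpa using omega1_pos
  · obtain ⟨g, rfl⟩ := hc.exists_eq_range hne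
    exact iSup_lt_omega1 g (fun n => hs _ (mem_range_self n))

lemma countable_Iio_omega1 {α : Ordinal} (h : α < omega1) : (Set.Iio α).Countable := by
  rw [Cardinal.countable_iff_lt_aleph_one _, Ordinal.mk_Iio_ordinal]
  have h1 : α.card < Cardinal.aleph 1 := Cardinal.lt_ord.1 h
  have := Cardinal.lift_lt.2 h1
  rwa [Cardinal.lift_aleph, Ordinal.lift_one] at this

lemma countable_colBelow {α : Ordinal} (h : α < omega1) : (colBelow α).Countable := by
  have hbig : {t : Set (ℕ × Ordinal) | t.Finite ∧ t ⊆ (univ : Set ℕ) ×ˢ Iio α}.Countable :=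
    Set.countable_setOf_finite_subset (countable_univ.prod (countable_Iio_omega1 h))
  have hinj : Function.Injective (fun p : Col => ((p.1 : Finset (ℕ × Ordinal)) : Set (ℕ × Ordinal))) :=
    fun p q hpq => Subtype.ext (Finset.coe_injective hpq)
  refine (hbig.preimage hinj).mono ?_
  intro p hp
  exact ⟨(p.1 : Finset (ℕ × Ordinal)).finite_toSet,
    fun x hx => ⟨mem_univ _, hp x hx⟩⟩

/-- If a club `X` contains, for all large `n`, a point strictly between `seq n` and
`seq (n+1)`, then it contains the supremum of `seq`. -/
lemma club_mem_iSup_s8 {X : Set Ordinal} (hX : IsClubOmega1 X) (seq : ℕ → Ordinal)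
    (hmono : Monotone seq) (hsb : ∀ n, seq n < omega1)
    (G : ℕ → Ordinal) (n₀ : ℕ)
    (hin : ∀ n, n₀ ≤ n → G n ∈ X)
    (h1 : ∀ n, n₀ ≤ n → seq n < G n)
    (h2 : ∀ n, n₀ ≤ n → G n ≤ seq (n + 1))
    (hlt : (⨆ n, seq n) < omega1) : (⨆ n, seq n) ∈ X := by
  set s' : Set Ordinal := G '' (Ici n₀) with hs'
  have hsub : s' ⊆ X := by rintro x ⟨n, hn, rfl⟩; exact hin n hn
  have hne : s'.Nonempty := ⟨G n₀, n₀, mem_Ici.2 le_rfl, rfl⟩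
  have hbddseq : BddAbove (range seq) := bddAbove_of_lt_omega1 (by rintro x ⟨n, rfl⟩; exact hsb n)
  have hbdds' : BddAbove s' := bddAbove_of_lt_omega1 (by
    rintro x ⟨n, hn, rfl⟩
    exact lt_of_le_of_lt ((h2 n hn).trans (le_ciSup hbddseq (n + 1))) hlt)
  have heq : sSup s' = ⨆ n, seq n := by
    apply le_antisymm
    · refine csSup_le hne ?_
      rintro x ⟨n, hn, rfl⟩
      exact (h2 n hn).trans (le_ciSup hbddseq (n + 1))
    · refine ciSup_le fun n => ?_
      have h3 : seq n ≤ seq (max n n₀) := hmono (le_max_left n n₀)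
      have h4 : seq (max n n₀) < G (max n n₀) := h1 _ (le_max_right n n₀)
      exact (h3.trans h4.le).trans (le_csSup hbdds' ⟨_, le_max_right n n₀, rfl⟩)
  have := hX.2.2 s' hsub hne (by rw [heq]; exact hlt)
  rwa [heq] at this

/-- For a nonempty condition `b` with all values below `μ`, and `μ = sSup s`,
there is `β ∈ s` with `b ∈ colBelow β`. -/
lemma exists_colBelow_of_lt_sSup {b : Col} {s : Set Ordinal} (hne : s.Nonempty)
    (hb : b ∈ colBelow (sSup s)) : ∃ β ∈ s, b ∈ colBelow β := by
  rcases (b.1 : Finset (ℕ × Ordinal)).eq_empty_or_nonempty with hemp | hbne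
  · exact ⟨hne.choose, hne.choose_spec, fun x hx => by rw [hemp] at hx; simp at hx⟩
  · set m := Finset.sup' b.1 hbne (fun x => x.2) with hm
    have hmlt : m < sSup s := by
      rw [hm, Finset.sup'_lt_iff]
      exact fun x hx => hb x hx
    obtain ⟨β, hβs, hβ⟩ := exists_lt_of_lt_csSup hne hmlt
    exact ⟨β, hβs, fun x hx => lt_of_le_of_lt (Finset.le_sup' (fun y => y.2) hx) hβ⟩

/-- The diagonal-intersection club used in the main theorem. -/
lemma isClub_diagonal (C₀ : Set Ordinal) (h₀ : IsClubOmega1 C₀) (C : Col → Set Ordinal)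
    (hC : ∀ b, IsClubOmega1 (C b)) :
    IsClubOmega1 {α | α ∈ C₀ ∧ α < omega1 ∧ ∀ b ∈ colBelow α, α ∈ C b} := by
  set E := {α | α ∈ C₀ ∧ α < omega1 ∧ ∀ b ∈ colBelow α, α ∈ C b} with hE
  have hCsub : ∀ b, C b ⊆ Iio omega1 := fun b => (hC b).1
  refine ⟨fun α hα => hα.2.1, ?_, ?_⟩
  · -- unboundedness
    intro o ho
    -- choice functions
    have H0 : ∀ β : Ordinal, β < omega1 → ∃ c, c ∈ C₀ ∧ β < c := by
      intro β hβ; obtain ⟨c, h1, h2⟩ := h₀.2.1 β hβ; exact ⟨c, h1, h2⟩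
    have HB : ∀ (b : Col) (β : Ordinal), β < omega1 → ∃ c, c ∈ C b ∧ β < c := by
      intro b β hβ; obtain ⟨c, h1, h2⟩ := (hC b).2.1 β hβ; exact ⟨c, h1, h2⟩
    choose! g₀ hg₀1 hg₀2 using H0
    choose! g hg1 hg2 using HB
    -- the blow-up function
    set step : Ordinal → Ordinal := fun β => sSup (insert (g₀ β) ((fun b => g b β) '' colBelow β))
      with hstep
    have hstepset : ∀ β, β < omega1 → ∀ x ∈ insert (g₀ β) ((fun b => g b β) '' colBelow β),
        x < omega1 := by
      intro β hβ x hx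
      rcases hx with rfl | ⟨b, _, rfl⟩
      · exact h₀.1 (hg₀1 β hβ)
      · exact hCsub b (hg1 b β hβ)
    have hstepcnt : ∀ β, β < omega1 →
        (insert (g₀ β) ((fun b => g b β) '' colBelow β)).Countable :=
      fun β hβ => (((countable_colBelow hβ).image _).insert _)
    have hsteplt : ∀ β, β < omega1 → step β < omega1 :=
      fun β hβ => sSup_lt_omega1 (hstepcnt β hβ) (hstepset β hβ)
    have hstepbdd : ∀ β, β < omega1 →
        BddAbove (insert (g₀ β) ((fun b => g b β) '' colBelow β)) :=
      fun β hβ => bddAbove_of_lt_omega1 (hstepset β hβ)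
    have hlt_step : ∀ β, β < omega1 → β < step β := fun β hβ =>
      lt_of_lt_of_le (hg₀2 β hβ) (le_csSup (hstepbdd β hβ) (mem_insert _ _))
    have hg₀_le_step : ∀ β, β < omega1 → g₀ β ≤ step β := fun β hβ =>
      le_csSup (hstepbdd β hβ) (mem_insert _ _)
    have hg_le_step : ∀ β, β < omega1 → ∀ b ∈ colBelow β, g b β ≤ step β := fun β hβ b hbcol =>
      le_csSup (hstepbdd β hβ) (mem_insert_of_mem _ ⟨b, hbcol, rfl⟩)
    -- the sequence
    set seq : ℕ → Ordinal := fun n => step^[n] o with hseq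
    have hseq0 : seq 0 = o := rfl
    have hseqsucc : ∀ n, seq (n + 1) = step (seq n) := by
      intro n; rw [hseq]; simp [Function.iterate_succ_apply']
    have hseqlt : ∀ n, seq n < omega1 := by
      intro n; induction n with
      | zero => exact ho
      | succ n ih => rw [hseqsucc]; exact hsteplt _ ih
    have hseqmono' : ∀ n, seq n < seq (n + 1) := by
      intro n; rw [hseqsucc]; exact hlt_step _ (hseqlt n)
    have hseqmono : Monotone seq := monotone_nat_of_le_succ (fun n => (hseqmono' n).le)
    set α := ⨆ n, seq n with hα
    have hαlt : α < omega1 := iSup_lt_omega1 seq hseqlt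
    have hbddseq : BddAbove (range seq) :=
      bddAbove_of_lt_omega1 (by rintro x ⟨n, rfl⟩; exact hseqlt n)
    have hoα : o < α := lt_of_lt_of_le (hseqmono' 0) (le_ciSup hbddseq 1)
    -- α ∈ C₀
    have hαC₀ : α ∈ C₀ := by
      refine club_mem_iSup_s8 h₀ seq hseqmono hseqlt (fun n => g₀ (seq n)) 0
        (fun n _ => hg₀1 _ (hseqlt n)) (fun n _ => hg₀2 _ (hseqlt n)) (fun n _ => ?_) hαlt
      rw [hseqsucc]; exact hg₀_le_step _ (hseqlt n)
    -- α ∈ C b for b ∈ colBelow α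
    refine ⟨α, ⟨hαC₀, hαlt, ?_⟩, hoα⟩
    intro b hbcol
    have hbα : b ∈ colBelow (sSup (range seq)) := by
      rw [hα] at hbcol; exact hbcol
    obtain ⟨β, ⟨n₀, rfl⟩, hbβ⟩ := exists_colBelow_of_lt_sSup (range_nonempty seq) hbα
    have hcolmono : ∀ n, n₀ ≤ n → b ∈ colBelow (seq n) := fun n hn x hx =>
      lt_of_lt_of_le (hbβ x hx) (hseqmono hn)
    refine club_mem_iSup_s8 (hC b) seq hseqmono hseqlt (fun n => g b (seq n)) n₀
      (fun n _ => hg1 b _ (hseqlt n)) (fun n _ => hg2 b _ (hseqlt n)) (fun n hn => ?_) hαlt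
    rw [hseqsucc]; exact hg_le_step _ (hseqlt n) b (hcolmono n hn)
  · -- closedness
    intro s hsub hne hlt
    have hsE : ∀ β ∈ s, β ∈ E := hsub
    have hslt : ∀ β ∈ s, β < omega1 := fun β hβ => (hsE β hβ).2.1
    refine ⟨?_, hlt, ?_⟩
    · exact h₀.2.2 s (fun β hβ => (hsE β hβ).1) hne hlt
    · intro b hbcol
      obtain ⟨β, hβs, hbβ⟩ := exists_colBelow_of_lt_sSup hne hbcol
      set s' : Set Ordinal := {γ ∈ s | β ≤ γ} with hs'
      have hs'sub : s' ⊆ C b := by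
        rintro γ ⟨hγs, hβγ⟩
        exact (hsE γ hγs).2.2 b (fun x hx => lt_of_lt_of_le (hbβ x hx) hβγ)
      have hs'ne : s'.Nonempty := ⟨β, hβs, le_rfl⟩
      have heq : sSup s' = sSup s := by
        apply le_antisymm
        · exact csSup_le hs'ne (fun γ hγ => le_csSup (bddAbove_of_lt_omega1 hslt) hγ.1)
        · refine csSup_le hne (fun γ hγ => ?_)
          have hbdd' : BddAbove s' :=
            bddAbove_of_lt_omega1 (fun x hx => hslt x hx.1)
          rcases le_total β γ with h | h
          · exact le_csSup hbdd' ⟨hγ, h⟩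
          · exact h.trans (le_csSup hbdd' ⟨hβs, le_rfl⟩)
      have := (hC b).2.2 s' hs'sub hs'ne (by rw [heq]; exact hlt)
      rwa [heq] at this

/-- Under the `◇⁺(ω₁^{<ω})`-style hypotheses, for every stationary `T` and every
maximal antichain `A` of `Col(ω,ω₁)` there is `b ∈ A` with `T ∩ S^f_b`
stationary; i.e. `b ↦ [S^f_b]` is a regular embedding of `Col(ω,ω₁)` into
`P(ω₁)/NS_{ω₁} \ {0}`. -/
theorem Sfb_regular_embedding (f : Ordinal → Set Col) (hf : Guesses f)
    (ha : ∀ D : Set Col, ColDense D →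
      ∃ C : Set Ordinal, IsClubOmega1 C ∧ C ⊆ {α | (f α ∩ D).Nonempty})
    (hb : ∀ b : Col, IsStationaryOmega1 (Sfb f b)) :
    ∀ T : Set Ordinal, IsStationaryOmega1 T → ∀ A : Set Col, MaxAntichain A →
      ∃ b ∈ A, IsStationaryOmega1 (T ∩ Sfb f b) := by
  intro T hT A hA
  by_contra hcon
  push_neg at hcon
  -- the dense set of conditions below some element of `A`
  set D : Set Col := {p | ∃ b ∈ A, p ≤ b} with hD
  have hDdense : ColDense D := by
    intro p
    obtain ⟨q, hq, r, hr1, hr2⟩ := hA.2 p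
    exact ⟨r, ⟨q, hq, hr2⟩, hr1⟩
  obtain ⟨C₀, hC₀, hC₀sub⟩ := ha D hDdense
  -- for each `b ∈ A` pick a club avoiding `T ∩ Sfb f b`
  have hclub : ∀ b : Col, ∃ X, IsClubOmega1 X ∧ (b ∈ A → (T ∩ Sfb f b) ∩ X = ∅) := by
    intro b
    by_cases hbA : b ∈ A
    · have hns := hcon b hbA
      rw [IsStationaryOmega1, not_and] at hns
      have hsub : T ∩ Sfb f b ⊆ Set.Iio omega1 := fun α hα => hα.2.1
      push_neg at hns
      obtain ⟨X, hX, hXe⟩ := hns hsub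
      exact ⟨X, hX, fun _ => hXe⟩
    · exact ⟨C₀, hC₀, fun h => absurd h hbA⟩
  choose Cb hCb1 hCb2 using hclub
  -- the diagonal club
  have hE := isClub_diagonal C₀ hC₀ Cb hCb1
  obtain ⟨α, hαT, hαE⟩ := hT.2 _ hE
  have hα : α < omega1 := hαE.2.1
  obtain ⟨p, hpf, b, hbA, hble⟩ := hC₀sub hαE.1
  have hfil := hf α hα
  have hpcol : p ∈ colBelow α := hfil.1 hpf
  have hbcol : b ∈ colBelow α := fun x hx => hpcol x (hble hx)
  have hbf : b ∈ f α := hfil.2.1 p hpf b hbcol hble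
  have hmem : α ∈ (T ∩ Sfb f b) ∩ Cb b := ⟨⟨hαT, hα, hbf⟩, hαE.2.2 b hbcol⟩
  rw [hCb2 b hbA] at hmem
  exact hmem
end
end

section
/- Suppose I is a normal uniform σ-complete ideal on ω₁ that is ω₁-dense: there is a family ⟨S_α : α < ω₁⟩ of I-positive sets such that every I-positive set T has some α with S_α ⊆ T modulo I. Then the family F = {F_α : α < ω₁}, where F_α is the filter dual to the restriction of I to S_α (i.e. F_α = {X ⊆ ω₁ : S_α \ X ∈ I}), is a family of ω₁-many σ-complete nonprincipal filters on ω₁ such that every X ⊆ ω₁ is measured by some member of F (i.e. X ∈ F_α or ω₁ \ X ∈ F_α for some α). -/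
open Set

noncomputable section

/-- The filter on `ω₁` dual to the restriction of the ideal `I` to `S`:
`{X ⊆ ω₁ : S \ X ∈ I}`. -/
def dualF (I : Set (Set Ordinal)) (S : Set Ordinal) : Set (Set Ordinal) :=
  {X | X ⊆ Set.Iio omega1 ∧ S \ X ∈ I}

/-- Taylor's direction: a normal uniform σ-complete `ω₁`-dense ideal on `ω₁`
yields `ω₁`-many σ-complete nonprincipal filters such that every subset of `ω₁`
is measured by one of them. -/
theorem dense_ideal_gives_ulam_family
    (I : Set (Set Ordinal))
    (hsub : ∀ A ∈ I, A ⊆ Set.Iio omega1)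
    (hdown : ∀ A ∈ I, ∀ B ⊆ A, B ∈ I)
    (hsigma : ∀ A : ℕ → Set Ordinal, (∀ n, A n ∈ I) → (⋃ n, A n) ∈ I)
    (huniform : ∀ A : Set Ordinal, (∃ β < omega1, A ⊆ Set.Iio β) → A ∈ I)
    (hnormal : ∀ A : Ordinal → Set Ordinal, (∀ α < omega1, A α ∈ I) →
      {ξ | ξ < omega1 ∧ ∃ α < ξ, ξ ∈ A α} ∈ I)
    (hproper : Set.Iio omega1 ∉ I)
    (S : Ordinal → Set Ordinal)
    (hSpos : ∀ α < omega1, S α ⊆ Set.Iio omega1 ∧ S α ∉ I)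
    (hdense : ∀ T ⊆ Set.Iio omega1, T ∉ I → ∃ α < omega1, S α \ T ∈ I) :
    (∀ α < omega1,
      (∅ : Set Ordinal) ∉ dualF I (S α) ∧
      (∀ X ∈ dualF I (S α), ∀ Y : Set Ordinal, X ⊆ Y → Y ⊆ Set.Iio omega1 →
        Y ∈ dualF I (S α)) ∧
      (∀ X : ℕ → Set Ordinal, (∀ n, X n ∈ dualF I (S α)) →
        (⋂ n, X n) ∈ dualF I (S α)) ∧
      (∀ X ⊆ Set.Iio omega1, (∃ β < omega1, ∀ ξ, β ≤ ξ → ξ < omega1 → ξ ∈ X) →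
        X ∈ dualF I (S α))) ∧
    (∀ X ⊆ Set.Iio omega1, ∃ α < omega1,
      X ∈ dualF I (S α) ∨ (Set.Iio omega1 \ X) ∈ dualF I (S α)) := by
  have h0 : (0 : Ordinal) < omega1 := by
    rw [omega1]
    exact Cardinal.lt_ord.2 (by simp [Cardinal.aleph_pos])
  constructor
  · intro α hα
    refine ⟨?_, ?_, ?_, ?_⟩
    · intro h
      exact (hSpos α hα).2 (by simpa using h.2)
    · intro X hX Y hXY hY
      exact ⟨hY, hdown _ hX.2 _ (fun x hx => ⟨hx.1, fun h => hx.2 (hXY h)⟩)⟩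
    · intro X hX
      refine ⟨fun x hx => (hX 0).1 (by exact mem_iInter.1 hx 0), ?_⟩
      have : S α \ (⋂ n, X n) = ⋃ n, S α \ X n := by
        ext x; simp [mem_iInter, not_forall]
      rw [this]
      exact hsigma _ fun n => (hX n).2
    · rintro X hX ⟨β, hβ, hco⟩
      refine ⟨hX, huniform _ ⟨β, hβ, ?_⟩⟩
      intro x hx
      by_contra hlt
      exact hx.2 (hco x (le_of_not_gt hlt) ((hSpos α hα).1 hx.1))
  · intro X hX
    by_cases hXI : X ∈ I
    · refine ⟨0, h0, Or.inr ⟨fun x hx => hx.1, ?_⟩⟩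
      exact hdown _ hXI _ (fun x hx => by
        rcases hx with ⟨hx1, hx2⟩
        by_contra h
        exact hx2 ⟨(hSpos 0 h0).1 hx1, h⟩)
    · obtain ⟨α, hα, h⟩ := hdense X hX hXI
      exact ⟨α, hα, Or.inl ⟨hX, h⟩⟩
end
end
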